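/- arXiv:math/9603211 — 6 statements merged into one kernel-verified Lean document; each statement's English description precedes it below -/
import Mathlib

section
/- Let H be a (d+1)-partite hypergraph on pairwise disjoint n-element vertex classes P_1, ..., P_{d+1} with at least β·n^{d+1} edges, where β > 0, and let 0 < ε < 1/2. Suppose S_i ⊆ P_i are subsets of equal size s = |S_1| = ... = |S_{d+1}| ≥ 1 that maximize the quantity e(S_1, ..., S_{d+1}) / s^{d+1−ε^{2d}} over all choices of equal-size subsets of the P_i. Then e(S_1, ..., S_{d+1}) ≥ β·s^{d+1} and s ≥ β^{1/ε^{2d}}·n. -/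
/-- For a `(d+1)`-partite hypergraph, given as a finite set `H` of edges where an
edge is recorded by the function selecting its vertex in each class,
`edgeCount H S` is the number `e(S 0, …, S d)` of edges of `H` whose vertex in the
`i`-th class belongs to `S i` for every `i`. -/
def edgeCount {V : Type*} [DecidableEq V] {d : ℕ} (H : Finset (Fin (d + 1) → V))
    (S : Fin (d + 1) → Finset V) : ℕ :=
  (H.filter fun e => ∀ i, e i ∈ S i).card

/-- If `H` has at least `β * n^(d+1)` edges, `0 < ε < 1/2`, and the equal-size
subsets `S i ⊆ P i` of size `s ≥ 1` maximize `e(S 0, …, S d) / s^(d+1-ε^(2d))`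
over all choices of equal-size subsets of the classes, then
`e(S 0, …, S d) ≥ β * s^(d+1)` and `s ≥ β^(1/ε^(2d)) * n`. -/
theorem maximizing_subsets_properties {V : Type*} [DecidableEq V] (d n : ℕ)
    (P : Fin (d + 1) → Finset V)
    (hdisj : Pairwise (fun i j => Disjoint (P i) (P j)))
    (hcard : ∀ i, (P i).card = n)
    (H : Finset (Fin (d + 1) → V)) (hH : ∀ e ∈ H, ∀ i, e i ∈ P i)
    (β : ℝ) (hβ : 0 < β) (hedges : β * (n : ℝ) ^ (d + 1) ≤ (H.card : ℝ))
    (ε : ℝ) (hε0 : 0 < ε) (hε1 : ε < 1 / 2)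
    (s : ℕ) (hs1 : 1 ≤ s)
    (S : Fin (d + 1) → Finset V) (hS : ∀ i, S i ⊆ P i) (hcardS : ∀ i, (S i).card = s)
    (hmax : ∀ (s' : ℕ) (S' : Fin (d + 1) → Finset V),
      (∀ i, S' i ⊆ P i) → (∀ i, (S' i).card = s') →
        (edgeCount H S' : ℝ) / (s' : ℝ) ^ ((d : ℝ) + 1 - ε ^ (2 * d)) ≤
          (edgeCount H S : ℝ) / (s : ℝ) ^ ((d : ℝ) + 1 - ε ^ (2 * d))) :
    β * (s : ℝ) ^ (d + 1) ≤ (edgeCount H S : ℝ) ∧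
      β ^ (1 / ε ^ (2 * d)) * (n : ℝ) ≤ (s : ℝ) := by
  set α : ℝ := ε ^ (2 * d) with hα
  have hα0 : 0 < α := pow_pos hε0 _
  have hα1 : α ≤ 1 := pow_le_one₀ hε0.le (by linarith)
  set A : ℝ := (d : ℝ) + 1 - α with hA
  have hA0 : 0 ≤ A := by
    have : (0:ℝ) ≤ (d:ℝ) := Nat.cast_nonneg d
    simp only [hA]; linarith
  have hsn : s ≤ n := by
    rw [← hcardS 0, ← hcard 0]; exact Finset.card_le_card (hS 0)
  have hn1 : 1 ≤ n := le_trans hs1 hsn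
  have hnR : (1:ℝ) ≤ (n:ℝ) := by exact_mod_cast hn1
  have hsR : (1:ℝ) ≤ (s:ℝ) := by exact_mod_cast hs1
  have hnpos : (0:ℝ) < n := by linarith
  have hspos : (0:ℝ) < s := by linarith
  have hAspos : (0:ℝ) < (s:ℝ) ^ A := Real.rpow_pos_of_pos hspos A
  have hAnpos : (0:ℝ) < (n:ℝ) ^ A := Real.rpow_pos_of_pos hnpos A
  -- edgeCount H P = H.card
  have hEP : edgeCount H P = H.card := by
    unfold edgeCount
    rw [Finset.filter_true_of_mem]
    exact hH
  have hmaxP := hmax n P (fun i => le_refl _) hcard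
  rw [hEP] at hmaxP
  have key : β * (n:ℝ) ^ (d + 1) / (n:ℝ) ^ A ≤ (edgeCount H S : ℝ) / (s:ℝ) ^ A := by
    refine le_trans ?_ hmaxP
    gcongr
  -- rewrite LHS as β * n^α
  have hpow : (n:ℝ) ^ (d + 1) / (n:ℝ) ^ A = (n:ℝ) ^ α := by
    rw [← Real.rpow_natCast (n:ℝ) (d+1), ← Real.rpow_sub hnpos]
    congr 1
    push_cast
    simp only [hA]
    ring
  have key2 : β * (n:ℝ) ^ α * (s:ℝ) ^ A ≤ (edgeCount H S : ℝ) := by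
    rw [← hpow]
    rw [mul_div_assoc] at key
    calc β * ((n:ℝ) ^ (d + 1) / (n:ℝ) ^ A) * (s:ℝ) ^ A
        ≤ (edgeCount H S : ℝ) / (s:ℝ) ^ A * (s:ℝ) ^ A :=
          mul_le_mul_of_nonneg_right key hAspos.le
      _ = (edgeCount H S : ℝ) := div_mul_cancel₀ _ hAspos.ne'
  have hsplit : (s:ℝ) ^ (d + 1) = (s:ℝ) ^ α * (s:ℝ) ^ A := by
    rw [← Real.rpow_natCast (s:ℝ) (d+1), ← Real.rpow_add hspos]
    congr 1
    push_cast
    simp only [hA]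
    ring
  have hsα : (s:ℝ) ^ α ≤ (n:ℝ) ^ α :=
    Real.rpow_le_rpow hspos.le (by exact_mod_cast hsn) hα0.le
  constructor
  · calc β * (s:ℝ) ^ (d+1) = β * ((s:ℝ) ^ α * (s:ℝ) ^ A) := by rw [hsplit]
      _ ≤ β * ((n:ℝ) ^ α * (s:ℝ) ^ A) := by
          have := mul_le_mul_of_nonneg_right hsα hAspos.le
          nlinarith
      _ = β * (n:ℝ) ^ α * (s:ℝ) ^ A := by ring
      _ ≤ _ := key2
  · -- e(S) ≤ s^(d+1)
    have hub : (edgeCount H S : ℝ) ≤ (s:ℝ) ^ (d+1) := by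
      have h1 : edgeCount H S ≤ s ^ (d+1) := by
        unfold edgeCount
        calc (H.filter fun e => ∀ i, e i ∈ S i).card
            ≤ (Fintype.piFinset S).card := by
              apply Finset.card_le_card
              intro e he
              rw [Finset.mem_filter] at he
              rw [Fintype.mem_piFinset]
              exact he.2
          _ = s ^ (d+1) := by
              rw [Fintype.card_piFinset]
              simp [hcardS]
      exact_mod_cast h1
    have hβn : β * (n:ℝ) ^ α ≤ (s:ℝ) ^ α := by
      have := le_trans key2 hub
      rw [hsplit] at this
      exact le_of_mul_le_mul_right (by linarith) hAspos
    have hβle : β ≤ ((s:ℝ)/(n:ℝ)) ^ α := by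
      rw [Real.div_rpow hspos.le hnpos.le]
      rw [le_div_iff₀ (Real.rpow_pos_of_pos hnpos α)]
      linarith
    have hfin : β ^ (1/α) ≤ (s:ℝ)/(n:ℝ) := by
      calc β ^ (1/α) ≤ (((s:ℝ)/(n:ℝ)) ^ α) ^ (1/α) :=
            Real.rpow_le_rpow hβ.le hβle (by positivity)
        _ = ((s:ℝ)/(n:ℝ)) ^ (α * (1/α)) := by
            rw [← Real.rpow_mul (by positivity)]
        _ = (s:ℝ)/(n:ℝ) := by
            rw [mul_one_div, div_self hα0.ne', Real.rpow_one]
    rw [mul_comm, ← le_div_iff₀' hnpos] at *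
    exact hfin
end

section
/- Let H be a (d+1)-partite hypergraph on pairwise disjoint n-element vertex classes P_1, ..., P_{d+1}, and let 0 < ε < 1/2 with ε·s an integer. Suppose S_i ⊆ P_i are subsets of equal size s = |S_1| = ... = |S_{d+1}| that maximize the quantity e(S_1, ..., S_{d+1}) / s^{d+1−ε^{2d}} over all choices of equal-size subsets of the P_i. Then for every ε·s-element subset Q_1 ⊆ S_1, one has e(S_1∖Q_1, S_2, ..., S_{d+1}) ≤ e(S_1, ..., S_{d+1}) · (1−ε)^{1−ε^{2d}}. -/
/-! Averaging over the `m`-subsets of one class shows that some `m` vertices can be removed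
from it while keeping at least a `(s - m)/s` fraction of the edges. Shrinking the classes
`1, …, d` in this way, starting from `(S 0 \ Q₁, S 1, …, S d)`, yields equal-size subsets of
size `(1 - ε) s` carrying at least `(1 - ε)^d e(S 0 \ Q₁, S 1, …, S d)` edges, and by
maximality of `S` at most `(1 - ε)^(d + 1 - ε^(2d)) e(S)` edges. -/

open Finset Function

section EdgeCount

variable {V : Type*} [DecidableEq V] {d : ℕ}

lemma edgeCount_eq_zero_of_eq_empty (H : Finset (Fin (d + 1) → V)) {T : Fin (d + 1) → Finset V}
    {i : Fin (d + 1)} (hT : T i = ∅) : edgeCount H T = 0 := by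
  rw [edgeCount, card_eq_zero, filter_eq_empty_iff]
  intro e _ he
  simpa [hT] using he i

lemma edgeCount_update_sdiff (H : Finset (Fin (d + 1) → V)) (T : Fin (d + 1) → Finset V)
    (i : Fin (d + 1)) (Q : Finset V) :
    edgeCount H (update T i (T i \ Q)) =
      #{e ∈ H.filter (fun e => ∀ j, e j ∈ T j) | e i ∉ Q} := by
  rw [edgeCount, filter_filter]
  congr 1
  ext e
  simp only [mem_filter, forall_update_iff T (p := fun j t => e j ∈ t), mem_sdiff]
  constructor
  · rintro ⟨hH, ⟨hi, hQ⟩, hT⟩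
    exact ⟨hH, fun j => if hj : j = i then hj ▸ hi else hT j hj, hQ⟩
  · rintro ⟨hH, hT, hQ⟩
    exact ⟨hH, ⟨hT i, hQ⟩, fun j _ => hT j⟩

lemma sum_powersetCard_edgeCount_update_sdiff (H : Finset (Fin (d + 1) → V))
    (T : Fin (d + 1) → Finset V) (i : Fin (d + 1)) (m : ℕ) :
    ∑ Q ∈ (T i).powersetCard m, edgeCount H (update T i (T i \ Q)) =
      edgeCount H T * (#(T i) - 1).choose m := by
  simp_rw [edgeCount_update_sdiff, card_filter]
  rw [sum_comm, edgeCount, card_eq_sum_ones, sum_mul, one_mul]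
  refine sum_congr rfl fun e he => ?_
  have hei : e i ∈ T i := (mem_filter.mp he).2 i
  rw [← card_filter, ← card_erase_of_mem hei, ← card_powersetCard]
  congr 1
  ext Q
  simp only [mem_filter, mem_powersetCard, subset_erase]
  tauto

lemma exists_edgeCount_mul_le_edgeCount_update_sdiff (H : Finset (Fin (d + 1) → V))
    (T : Fin (d + 1) → Finset V) (i : Fin (d + 1)) {m : ℕ} (hm : m ≤ #(T i)) :
    ∃ Q ⊆ T i, #Q = m ∧
      edgeCount H T * (#(T i) - m) ≤ edgeCount H (update T i (T i \ Q)) * #(T i) := by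
  have hchoose : (#(T i)).choose m * (#(T i) - m) = (#(T i) - 1).choose m * #(T i) := by
    rcases Nat.eq_zero_or_pos #(T i) with h | h
    · simp [h]
    · obtain ⟨t, ht⟩ : ∃ t, #(T i) = t + 1 := ⟨_, (Nat.succ_pred_eq_of_pos h).symm⟩
      rw [ht, Nat.add_sub_cancel, Nat.choose_mul_succ_eq]
  have hsum : ∑ Q ∈ (T i).powersetCard m, edgeCount H T * (#(T i) - m) =
      ∑ Q ∈ (T i).powersetCard m, edgeCount H (update T i (T i \ Q)) * #(T i) := by
    rw [sum_const, card_powersetCard, ← sum_mul, sum_powersetCard_edgeCount_update_sdiff,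
      smul_eq_mul, mul_left_comm, hchoose]
    ring
  obtain ⟨Q, hQ, hQle⟩ := exists_le_of_sum_le (powersetCard_nonempty.mpr hm) hsum.le
  rw [mem_powersetCard] at hQ
  exact ⟨Q, hQ.1, hQ.2, hQle⟩

lemma exists_shrink_edgeCount_mul_pow_le (H : Finset (Fin (d + 1) → V))
    (T : Fin (d + 1) → Finset V) (J : Finset (Fin (d + 1))) {s m : ℕ}
    (hT : ∀ j ∈ J, #(T j) = s) (hm : m ≤ s) :
    ∃ T' : Fin (d + 1) → Finset V, (∀ j, T' j ⊆ T j) ∧ (∀ j ∈ J, #(T' j) = s - m) ∧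
      (∀ j ∉ J, T' j = T j) ∧ edgeCount H T * (s - m) ^ #J ≤ edgeCount H T' * s ^ #J := by
  induction J using Finset.induction_on with
  | empty => exact ⟨T, fun _ => subset_rfl, by simp, fun _ _ => rfl, by simp⟩
  | @insert a J ha ih =>
    obtain ⟨T', hT'T, hT'card, hT'out, hT'le⟩ :=
      ih fun j hj => hT j (mem_insert_of_mem hj)
    have hT'a : #(T' a) = s := by rw [hT'out a ha, hT a (mem_insert_self a J)]
    obtain ⟨Q, hQ, hQcard, hQle⟩ :=
      exists_edgeCount_mul_le_edgeCount_update_sdiff H T' a (hT'a ▸ hm)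
    rw [hT'a] at hQle
    refine ⟨update T' a (T' a \ Q), fun j => ?_, fun j hj => ?_, fun j hj => ?_, ?_⟩
    · rcases eq_or_ne j a with rfl | hja
      · simpa using sdiff_subset.trans (hT'T j)
      · simpa [hja] using hT'T j
    · rcases eq_or_ne j a with rfl | hja
      · simp [card_sdiff_of_subset hQ, hT'a, hQcard]
      · simpa [hja] using hT'card j ((mem_insert.mp hj).resolve_left hja)
    · rw [mem_insert, not_or] at hj
      simpa [hj.1] using hT'out j hj.2
    · rw [card_insert_of_notMem ha]
      calc edgeCount H T * (s - m) ^ (#J + 1)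
          = edgeCount H T * (s - m) ^ #J * (s - m) := by ring
        _ ≤ edgeCount H T' * s ^ #J * (s - m) := Nat.mul_le_mul_right _ hT'le
        _ = edgeCount H T' * (s - m) * s ^ #J := by ring
        _ ≤ edgeCount H (update T' a (T' a \ Q)) * s * s ^ #J := Nat.mul_le_mul_right _ hQle
        _ = edgeCount H (update T' a (T' a \ Q)) * s ^ (#J + 1) := by ring

end EdgeCount

lemma le_mul_rpow_of_mul_pow_le_of_div_rpow_le {a b c r s β : ℝ} {d : ℕ} (hr : 0 < r)
    (hs : 0 < s) (hbc : b * (r * s) ^ d ≤ c * s ^ d)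
    (hca : c / (r * s) ^ ((d : ℝ) + β) ≤ a / s ^ ((d : ℝ) + β)) :
    b ≤ a * r ^ β := by
  have hrs : (r * s) ^ ((d : ℝ) + β) = r ^ (d : ℝ) * r ^ β * s ^ ((d : ℝ) + β) := by
    rw [Real.mul_rpow hr.le hs.le, Real.rpow_add hr]
  rw [div_le_div_iff₀ (by positivity) (by positivity), hrs] at hca
  have hc : c ≤ a * (r ^ (d : ℝ) * r ^ β) :=
    le_of_mul_le_mul_right (by linarith) (Real.rpow_pos_of_pos hs _)
  rw [mul_pow, ← mul_assoc] at hbc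
  have hb : b * r ^ d ≤ c := le_of_mul_le_mul_right hbc (pow_pos hs d)
  rw [Real.rpow_natCast] at hc
  exact le_of_mul_le_mul_right (by linarith) (pow_pos hr d)

theorem maximizing_subsets_removal_bound_general {V : Type*} [DecidableEq V] (d : ℕ)
    (P : Fin (d + 1) → Finset V)
    (H : Finset (Fin (d + 1) → V))
    (ε : ℝ) (hε1 : ε < 1 / 2)
    (s : ℕ)
    (S : Fin (d + 1) → Finset V) (hS : ∀ i, S i ⊆ P i) (hcardS : ∀ i, (S i).card = s)
    (hmax : ∀ (s' : ℕ) (S' : Fin (d + 1) → Finset V),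
      (∀ i, S' i ⊆ P i) → (∀ i, (S' i).card = s') →
        (edgeCount H S' : ℝ) / (s' : ℝ) ^ ((d : ℝ) + 1 - ε ^ (2 * d)) ≤
          (edgeCount H S : ℝ) / (s : ℝ) ^ ((d : ℝ) + 1 - ε ^ (2 * d)))
    (m : ℕ) (hm : (m : ℝ) = ε * (s : ℝ))
    (Q₁ : Finset V) (hQ₁ : Q₁ ⊆ S 0) (hQ₁card : Q₁.card = m) :
    (edgeCount H (Function.update S 0 (S 0 \ Q₁)) : ℝ) ≤
      (edgeCount H S : ℝ) * (1 - ε) ^ ((1 : ℝ) - ε ^ (2 * d)) := by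
  rcases Nat.eq_zero_or_pos s with rfl | hs
  · have hS0 : S 0 = ∅ := card_eq_zero.mp (hcardS 0)
    rw [edgeCount_eq_zero_of_eq_empty H (i := 0) (by simp [hS0]), Nat.cast_zero]
    exact mul_nonneg (Nat.cast_nonneg _) (Real.rpow_nonneg (by linarith) _)
  have hsR : (0 : ℝ) < s := Nat.cast_pos.mpr hs
  have hms : m ≤ s := by exact_mod_cast (show (m : ℝ) ≤ s by nlinarith)
  have hsm : ((s - m : ℕ) : ℝ) = (1 - ε) * s := by rw [Nat.cast_sub hms, hm]; ring
  set T₀ := update S 0 (S 0 \ Q₁)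
  obtain ⟨T, hTT₀, hTcard, hTout, hle⟩ :=
    exists_shrink_edgeCount_mul_pow_le H T₀ (univ.erase 0)
    (fun j hj => by simp [T₀, ne_of_mem_erase hj, hcardS]) hms
  have hTcard' : ∀ j, #(T j) = s - m := fun j => by
    by_cases hj : j = 0
    · subst hj
      rw [hTout 0 (by simp)]
      simp [T₀, card_sdiff_of_subset hQ₁, hcardS, hQ₁card]
    · exact hTcard j (mem_erase.mpr ⟨hj, mem_univ j⟩)
  have hTP : ∀ j, T j ⊆ P j := fun j => by
    have hT₀S : T₀ ≤ S := update_le_iff.mpr ⟨sdiff_subset, fun _ _ => le_rfl⟩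
    exact ((hTT₀ j).trans (hT₀S j)).trans (hS j)
  rw [card_erase_of_mem (mem_univ 0), card_univ, Fintype.card_fin, Nat.add_sub_cancel] at hle
  have hmaxT := hmax (s - m) T hTP hTcard'
  rw [hsm, add_sub_assoc] at hmaxT
  refine le_mul_rpow_of_mul_pow_le_of_div_rpow_le (by linarith) hsR ?_ hmaxT
  rw [← hsm]
  exact_mod_cast hle

/-- If `0 < ε < 1/2`, `ε * s` is an integer, and the equal-size subsets `S i ⊆ P i`
of size `s` maximize `e(S 0, …, S d) / s^(d+1-ε^(2d))` over all choices of
equal-size subsets of the classes, then for every `ε * s`-element subset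
`Q₁ ⊆ S 0` we have
`e(S 0 \ Q₁, S 1, …, S d) ≤ e(S 0, …, S d) * (1-ε)^(1-ε^(2d))`. -/
theorem maximizing_subsets_removal_bound {V : Type*} [DecidableEq V] (d n : ℕ)
    (P : Fin (d + 1) → Finset V)
    (hdisj : Pairwise (fun i j => Disjoint (P i) (P j)))
    (hcard : ∀ i, (P i).card = n)
    (H : Finset (Fin (d + 1) → V)) (hH : ∀ e ∈ H, ∀ i, e i ∈ P i)
    (ε : ℝ) (hε0 : 0 < ε) (hε1 : ε < 1 / 2)
    (s : ℕ)
    (S : Fin (d + 1) → Finset V) (hS : ∀ i, S i ⊆ P i) (hcardS : ∀ i, (S i).card = s)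
    (hmax : ∀ (s' : ℕ) (S' : Fin (d + 1) → Finset V),
      (∀ i, S' i ⊆ P i) → (∀ i, (S' i).card = s') →
        (edgeCount H S' : ℝ) / (s' : ℝ) ^ ((d : ℝ) + 1 - ε ^ (2 * d)) ≤
          (edgeCount H S : ℝ) / (s : ℝ) ^ ((d : ℝ) + 1 - ε ^ (2 * d)))
    (m : ℕ) (hm : (m : ℝ) = ε * (s : ℝ))
    (Q₁ : Finset V) (hQ₁ : Q₁ ⊆ S 0) (hQ₁card : Q₁.card = m) :
    (edgeCount H (Function.update S 0 (S 0 \ Q₁)) : ℝ) ≤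
      (edgeCount H S : ℝ) * (1 - ε) ^ ((1 : ℝ) - ε ^ (2 * d)) :=
  maximizing_subsets_removal_bound_general d P H ε hε1 s S hS hcardS hmax m hm Q₁ hQ₁ hQ₁card
end

section
/- For every integer d ≥ 1 and every real ε with 0 < ε < 1/2, one has 1 − (1−ε)^{1−ε^{2d}} − ε^{1−ε^{2d}} + ε^{d+1−ε^{2d}} > 0; equivalently, (1−ε)^{1−ε^{2d}} + ε^{1−ε^{2d}} − ε^{d+1−ε^{2d}} < 1. -/
/-!
Write `t = ε ^ (2d) = u ^ 2` with `u = ε ^ d`. The tangent-line bound `y - 1 ≤ y log y` applied to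
`y = x ^ (-t)` gives `x ^ (1 - t) - x ≤ t · (-log x) · x ^ (1 - t)`, so each of the two powers
exceeds its base by only `O(t) · ε ^ (1 - t)`; in total by at most `t (1 - log ε) ε ^ (1 - t)`.
The term `u ε ^ (1 - t)` wins because `u (1 - log ε) ≤ ε (1 - log ε) < 1`, i.e. `t (1 - log ε) < u`.
-/

open Real

lemma rpow_one_sub_sub_self_le {x : ℝ} (hx : 0 < x) (t : ℝ) :
    x ^ (1 - t) - x ≤ t * -log x * x ^ (1 - t) := by
  have hsplit : x ^ (1 - t) = x * x ^ (-t) := by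
    rw [rpow_sub hx, rpow_one, rpow_neg hx.le, div_eq_mul_inv]
  have h := self_sub_one_le_mul_log (rpow_nonneg hx.le (-t))
  rw [log_rpow hx] at h
  calc x ^ (1 - t) - x = x * (x ^ (-t) - 1) := by rw [hsplit]; ring
    _ ≤ x * (x ^ (-t) * (-t * log x)) := mul_le_mul_of_nonneg_left h hx.le
    _ = t * -log x * x ^ (1 - t) := by rw [hsplit]; ring

lemma neg_log_one_sub_mul_rpow_le {ε t : ℝ} (hε0 : 0 < ε) (hε : ε ≤ 1 / 2) (ht : 0 ≤ t) :
    -log (1 - ε) * (1 - ε) ^ (1 - t) ≤ ε ^ (1 - t) := by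
  have hpos : 0 < 1 - ε := by linarith
  have hlog : -log (1 - ε) * (1 - ε) ≤ ε := by
    nlinarith [self_sub_one_le_mul_log hpos.le]
  have hmono : (1 - ε) ^ (-t) ≤ ε ^ (-t) := rpow_le_rpow_of_nonpos hε0 (by linarith) (by linarith)
  calc -log (1 - ε) * (1 - ε) ^ (1 - t) = -log (1 - ε) * (1 - ε) * (1 - ε) ^ (-t) := by
        rw [rpow_sub hpos, rpow_one, rpow_neg hpos.le, div_eq_mul_inv]; ring
    _ ≤ ε * ε ^ (-t) := mul_le_mul hlog hmono (rpow_nonneg hpos.le _) hε0.le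
    _ = ε ^ (1 - t) := by rw [rpow_sub hε0, rpow_one, rpow_neg hε0.le, div_eq_mul_inv]

lemma mul_one_sub_log_lt_one {x : ℝ} (hx0 : 0 < x) (hx1 : x < 1) : x * (1 - log x) < 1 := by
  have h := log_lt_sub_one_of_pos (inv_pos.2 hx0) (inv_ne_one.2 hx1.ne)
  rw [log_inv] at h
  calc x * (1 - log x) < x * x⁻¹ := mul_lt_mul_of_pos_left (by linarith) hx0
    _ = 1 := mul_inv_cancel₀ hx0.ne'

lemma one_sub_rpow_add_rpow_sub_mul_rpow_lt_one {ε u : ℝ} (hε0 : 0 < ε) (hε : ε ≤ 1 / 2)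
    (hu0 : 0 < u) (hu : u * (1 - log ε) < 1) :
    (1 - ε) ^ (1 - u ^ 2) + ε ^ (1 - u ^ 2) - u * ε ^ (1 - u ^ 2) < 1 := by
  set t := u ^ 2 with ht
  have ht0 : 0 ≤ t := sq_nonneg u
  have hp : 0 < ε ^ (1 - t) := rpow_pos_of_pos hε0 _
  have hbig : (1 - ε) ^ (1 - t) - (1 - ε) ≤ t * ε ^ (1 - t) := by
    have h := rpow_one_sub_sub_self_le (x := 1 - ε) (by linarith) t
    nlinarith [mul_le_mul_of_nonneg_left (neg_log_one_sub_mul_rpow_le hε0 hε ht0) ht0]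
  have hsmall : ε ^ (1 - t) - ε ≤ t * -log ε * ε ^ (1 - t) := rpow_one_sub_sub_self_le hε0 t
  have hgain : t * (1 - log ε) < u := by
    rw [ht, sq, mul_assoc]
    exact mul_lt_of_lt_one_right hu0 hu
  nlinarith [mul_lt_mul_of_pos_right hgain hp]

/-- For every integer `d ≥ 1` and `0 < ε < 1/2`,
`1 - (1-ε)^(1-ε^(2d)) - ε^(1-ε^(2d)) + ε^(d+1-ε^(2d)) > 0`; equivalently,
`(1-ε)^(1-ε^(2d)) + ε^(1-ε^(2d)) - ε^(d+1-ε^(2d)) < 1`.  (Real powers.) -/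
theorem key_epsilon_inequality (d : ℕ) (hd : 1 ≤ d) (ε : ℝ) (hε0 : 0 < ε) (hε1 : ε < 1 / 2) :
    0 < 1 - (1 - ε) ^ ((1 : ℝ) - ε ^ (2 * d)) - ε ^ ((1 : ℝ) - ε ^ (2 * d))
        + ε ^ ((d : ℝ) + 1 - ε ^ (2 * d)) ∧
      (1 - ε) ^ ((1 : ℝ) - ε ^ (2 * d)) + ε ^ ((1 : ℝ) - ε ^ (2 * d))
        - ε ^ ((d : ℝ) + 1 - ε ^ (2 * d)) < 1 := by
  have hpow_le : ε ^ d ≤ ε := pow_le_of_le_one hε0.le (by linarith) (by omega)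
  have hu : ε ^ d * (1 - log ε) < 1 :=
    (mul_le_mul_of_nonneg_right hpow_le
      (by linarith [log_neg hε0 (by linarith : ε < 1)])).trans_lt
      (mul_one_sub_log_lt_one hε0 (by linarith))
  have key := one_sub_rpow_add_rpow_sub_mul_rpow_lt_one hε0 hε1.le (pow_pos hε0 d) hu
  rw [← pow_mul, mul_comm d 2] at key
  have hsplit : ε ^ ((d : ℝ) + 1 - ε ^ (2 * d)) = ε ^ d * ε ^ ((1 : ℝ) - ε ^ (2 * d)) := by
    rw [add_sub_assoc, rpow_add hε0, rpow_natCast]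
  rw [hsplit]
  exact ⟨by linarith, key⟩
end

section
/- For every integer d ≥ 1 and every real ε with 0 < ε < 1/2, the sum Σ_{i=2}^{d+1} ε^{i−1−ε^{2d}}·(1−ε) equals ε^{1−ε^{2d}} − ε^{d+1−ε^{2d}}, and consequently 1 − (1−ε)^{1−ε^{2d}} − Σ_{i=2}^{d+1} ε^{i−1−ε^{2d}}·(1−ε) > 0. -/
/-- For every integer `d ≥ 1` and `0 < ε < 1/2`, the sum
`∑_{i=2}^{d+1} ε^(i-1-ε^(2d)) * (1-ε)` equals `ε^(1-ε^(2d)) - ε^(d+1-ε^(2d))`, and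
consequently `1 - (1-ε)^(1-ε^(2d)) - ∑_{i=2}^{d+1} ε^(i-1-ε^(2d)) * (1-ε) > 0`.
(Real powers.) -/
theorem epsilon_sum_identity_and_inequality (d : ℕ) (hd : 1 ≤ d)
    (ε : ℝ) (hε0 : 0 < ε) (hε1 : ε < 1 / 2) :
    (∑ i ∈ Finset.Icc 2 (d + 1), ε ^ ((i : ℝ) - 1 - ε ^ (2 * d)) * (1 - ε) =
        ε ^ ((1 : ℝ) - ε ^ (2 * d)) - ε ^ ((d : ℝ) + 1 - ε ^ (2 * d))) ∧
      0 < 1 - (1 - ε) ^ ((1 : ℝ) - ε ^ (2 * d))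
          - ∑ i ∈ Finset.Icc 2 (d + 1), ε ^ ((i : ℝ) - 1 - ε ^ (2 * d)) * (1 - ε) := by
  have hε1' : ε < 1 := hε1.trans (by norm_num)
  set c : ℝ := ε ^ (2 * d) with hc
  have hc0 : 0 < c := pow_pos hε0 _
  have hc1 : c < 1 := pow_lt_one₀ hε0.le hε1' (by omega)
  -- telescoping sum
  have key : ∀ i : ℕ, ε ^ ((i : ℝ) - 1 - c) * (1 - ε)
      = ε ^ ((i : ℝ) - 1 - c) - ε ^ ((i : ℝ) - c) := by
    intro i
    have h : ε ^ ((i : ℝ) - c) = ε ^ ((i : ℝ) - 1 - c) * ε := by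
      rw [← Real.rpow_add_one hε0.ne']; ring_nf
    rw [h]; ring
  have hsum : ∑ i ∈ Finset.Icc 2 (d + 1), ε ^ ((i : ℝ) - 1 - c) * (1 - ε)
      = ε ^ ((1 : ℝ) - c) - ε ^ ((d : ℝ) + 1 - c) := by
    rw [← Finset.Ico_add_one_right_eq_Icc, Finset.sum_Ico_eq_sum_range]
    have hdd : d + 1 + 1 - 2 = d := by omega
    rw [hdd]
    have : ∀ j ∈ Finset.range d, ε ^ ((↑(2 + j) : ℝ) - 1 - c) * (1 - ε)
        = (fun j : ℕ => ε ^ ((j : ℝ) + 1 - c)) j - (fun j : ℕ => ε ^ ((j : ℝ) + 1 - c)) (j + 1) := by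
      intro j _
      rw [key]
      push_cast
      ring_nf
    rw [Finset.sum_congr rfl this, Finset.sum_range_sub']
    push_cast
    ring_nf
  refine ⟨hsum, ?_⟩
  rw [hsum]
  -- Bernoulli bounds
  have bern : ∀ x : ℝ, 0 ≤ x → x ^ ((1 : ℝ) - c) ≤ x + c * (1 - x) := by
    intro x hx
    have h := rpow_one_add_le_one_add_mul_self (s := x - 1) (p := 1 - c)
      (by linarith) (by linarith) (by linarith)
    calc x ^ ((1 : ℝ) - c) = (1 + (x - 1)) ^ ((1 : ℝ) - c) := by ring_nf
    _ ≤ 1 + (1 - c) * (x - 1) := h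
    _ = x + c * (1 - x) := by ring
  have b1 : (1 - ε) ^ ((1 : ℝ) - c) ≤ (1 - ε) + c * ε := by
    have := bern (1 - ε) (by linarith)
    linarith [this]
  have b2 : ε ^ ((1 : ℝ) - c) ≤ ε + c * (1 - ε) := by
    have := bern ε hε0.le
    linarith [this]
  -- ε^(d+1-c) = ε^(1-c) * ε^d
  have hsplit : ε ^ ((d : ℝ) + 1 - c) = ε ^ ((1 : ℝ) - c) * ε ^ d := by
    rw [← Real.rpow_natCast ε d, ← Real.rpow_add hε0]; ring_nf
  have hεd0 : (0 : ℝ) < ε ^ d := pow_pos hε0 d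
  have hεd1 : ε ^ d < 1 := pow_lt_one₀ hε0.le hε1' (by omega)
  have hpos : (0 : ℝ) < ε ^ ((1 : ℝ) - c) := Real.rpow_pos_of_pos hε0 _
  -- ε^(1-c) - ε^(d+1-c) = ε^(1-c) * (1 - ε^d) ≤ (ε + c(1-ε)) * (1 - ε^d)
  have hfac : ε ^ ((1 : ℝ) - c) - ε ^ ((d : ℝ) + 1 - c)
      ≤ (ε + c * (1 - ε)) * (1 - ε ^ d) := by
    rw [hsplit]
    have : ε ^ ((1 : ℝ) - c) * (1 - ε ^ d) ≤ (ε + c * (1 - ε)) * (1 - ε ^ d) :=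
      mul_le_mul_of_nonneg_right b2 (by linarith)
    nlinarith
  -- c = ε^(2d) ≤ ε^(d+1)
  have hcle : c ≤ ε ^ (d + 1) := by
    rw [hc]
    exact pow_le_pow_of_le_one hε0.le hε1'.le (by omega)
  have hεd1' : ε ^ (d + 1) = ε ^ d * ε := by rw [pow_succ]
  nlinarith [mul_pos hc0 (mul_pos hεd0 (show (0:ℝ) < 1 - ε by linarith))]
end

section
/- Let C_1, ..., C_n be a separated family of convex sets in R^d with n ≥ d+1. Then the order type of (p_1, ..., p_n) is the same for every choice of points p_i ∈ C_i (1 ≤ i ≤ n): for any two choices p_i ∈ C_i and q_i ∈ C_i and any indices 1 ≤ i_1 < ... < i_{d+1} ≤ n, the simplices with vertex sequences p_{i_1}, ..., p_{i_{d+1}} and q_{i_1}, ..., q_{i_{d+1}} have the same orientation, i.e., the determinants det(p_{i_2}−p_{i_1}, ..., p_{i_{d+1}}−p_{i_1}) and det(q_{i_2}−q_{i_1}, ..., q_{i_{d+1}}−q_{i_1}) have the same sign. -/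
/-- A `(d+1)`-tuple of sets in `ℝᵈ` is separated if, for every `j` with
`1 ≤ j ≤ d` and every partition of the tuple into `j` and `d+1-j` sets, some
affine hyperplane strictly separates the union of the first group from the union
of the second group. -/
def SeparatedTuple (d : ℕ) (C : Fin (d + 1) → Set (EuclideanSpace ℝ (Fin d))) : Prop :=
  ∀ I : Finset (Fin (d + 1)), 1 ≤ I.card → I.card ≤ d →
    ∃ (f : EuclideanSpace ℝ (Fin d) →L[ℝ] ℝ) (c : ℝ), f ≠ 0 ∧
      (∀ i ∈ I, ∀ x ∈ C i, f x < c) ∧ (∀ i ∉ I, ∀ x ∈ C i, c < f x)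

/-- A family of at least `d+1` sets in `ℝᵈ` is separated if every `(d+1)`-tuple
of its members is separated. -/
def SeparatedFamily (d : ℕ) {ι : Type*} (C : ι → Set (EuclideanSpace ℝ (Fin d))) : Prop :=
  ∀ g : Fin (d + 1) → ι, Function.Injective g → SeparatedTuple d (C ∘ g)

/-! If some transversal `r i ∈ D i` of a separated tuple were affinely dependent, Radon's theorem
would split it into two groups whose convex hulls meet; but the hyperplane separating the
corresponding groups of sets also separates those hulls. So the orientation determinant never
vanishes on the set of transversals. For convex sets this set is convex, hence connected, and a
continuous nonvanishing real function has constant sign on a connected set. -/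

open Finset

theorem IsPreconnected.sign_eq_of_ne_zero {X : Type*} [TopologicalSpace X] {S : Set X}
    (hS : IsPreconnected S) {f : X → ℝ} (hf : ContinuousOn f S) (hf0 : ∀ x ∈ S, f x ≠ 0)
    {x y : X} (hx : x ∈ S) (hy : y ∈ S) : Real.sign (f x) = Real.sign (f y) := by
  have no_sign_change : ∀ a ∈ S, ∀ b ∈ S, f a < 0 → ¬ 0 < f b := by
    intro a ha b hb hfa hfb
    obtain ⟨c, hc, hfc⟩ := hS.intermediate_value ha hb hf ⟨hfa.le, hfb.le⟩
    exact hf0 c hc hfc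
  rcases (hf0 x hx).lt_or_gt with hfx | hfx <;> rcases (hf0 y hy).lt_or_gt with hfy | hfy
  · rw [Real.sign_of_neg hfx, Real.sign_of_neg hfy]
  · exact absurd hfy (no_sign_change x hx y hy hfx)
  · exact absurd hfx (no_sign_change y hy x hx hfy)
  · rw [Real.sign_of_pos hfx, Real.sign_of_pos hfy]

noncomputable def orientationDet {d : ℕ} (r : Fin (d + 1) → EuclideanSpace ℝ (Fin d)) : ℝ :=
  Matrix.det (Matrix.of fun k l : Fin d => (r l.succ - r 0) k)

theorem continuous_orientationDet (d : ℕ) :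
    Continuous (orientationDet : (Fin (d + 1) → EuclideanSpace ℝ (Fin d)) → ℝ) := by
  unfold orientationDet
  fun_prop

theorem AffineIndependent.orientationDet_ne_zero {d : ℕ}
    {r : Fin (d + 1) → EuclideanSpace ℝ (Fin d)} (hr : AffineIndependent ℝ r) :
    orientationDet r ≠ 0 := by
  intro hdet
  obtain ⟨v, hv0, hmv⟩ := Matrix.exists_mulVec_eq_zero_iff.mpr hdet
  -- a kernel vector `v` gives the affine dependence `∑ v l • (r l.succ - r 0) = 0`
  set w : Fin (d + 1) → ℝ := Fin.cons (-∑ l, v l) v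
  have hw0 : ∑ i, w i = 0 := by simp [w, Fin.sum_univ_succ]
  have hw1 : ∑ i, w i • r i = 0 := by
    ext k
    have hk := congrFun hmv k
    simp only [Matrix.mulVec, dotProduct, Matrix.of_apply, PiLp.sub_apply, Pi.zero_apply,
      sub_mul, sum_sub_distrib, ← mul_sum] at hk
    simp only [w, Fin.sum_univ_succ, Fin.cons_zero, Fin.cons_succ, PiLp.add_apply,
      PiLp.smul_apply, WithLp.ofLp_sum, Finset.sum_apply, smul_eq_mul, PiLp.zero_apply]
    linarith [sum_congr rfl fun l (_ : l ∈ univ) => mul_comm (v l) ((r l.succ).ofLp k)]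
  exact hv0 (funext fun l => by
    simpa [w] using hr.eq_zero_of_sum_eq_zero hw0 hw1 l.succ (mem_univ _))

section SeparatedTuple

variable {d : ℕ} {D : Fin (d + 1) → Set (EuclideanSpace ℝ (Fin d))}
  {r : Fin (d + 1) → EuclideanSpace ℝ (Fin d)}

theorem SeparatedTuple.disjoint_convexHull_image (hD : SeparatedTuple d D) (hr : ∀ i, r i ∈ D i)
    (I : Set (Fin (d + 1))) : Disjoint (convexHull ℝ (r '' I)) (convexHull ℝ (r '' Iᶜ)) := by
  classical
  rcases I.eq_empty_or_nonempty with rfl | ⟨i, hi⟩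
  · simp
  rcases Iᶜ.eq_empty_or_nonempty with hIc | ⟨j, hj⟩
  · simp [hIc]
  have hcard : I.toFinset.card ≤ d := by
    simpa using card_lt_univ_of_notMem (s := I.toFinset) (x := j) (by simpa using hj)
  obtain ⟨f, c, -, hlt, hgt⟩ := hD I.toFinset (card_pos.2 ⟨i, by simpa using hi⟩) hcard
  have hI : convexHull ℝ (r '' I) ⊆ {x | f x < c} :=
    convexHull_min (by rintro _ ⟨i, hi, rfl⟩; exact hlt i (by simpa using hi) _ (hr i))
      (convex_halfSpace_lt f.isLinear c)
  have hIc : convexHull ℝ (r '' Iᶜ) ⊆ {x | c < f x} :=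
    convexHull_min (by rintro _ ⟨i, hi, rfl⟩; exact hgt i (by simpa using hi) _ (hr i))
      (convex_halfSpace_gt f.isLinear c)
  exact Set.disjoint_of_subset hI hIc
    (Set.disjoint_left.2 fun x (h₁ : f x < c) h₂ => lt_asymm h₁ h₂)

theorem SeparatedTuple.affineIndependent (hD : SeparatedTuple d D) (hr : ∀ i, r i ∈ D i) :
    AffineIndependent ℝ r := by
  by_contra h
  obtain ⟨I, hI⟩ := Convex.radon_partition h
  exact Set.not_disjoint_iff_nonempty_inter.2 hI (hD.disjoint_convexHull_image hr I)

theorem SeparatedTuple.sign_orientationDet_eq (hD : SeparatedTuple d D)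
    (hconv : ∀ i, Convex ℝ (D i)) {p q : Fin (d + 1) → EuclideanSpace ℝ (Fin d)}
    (hp : ∀ i, p i ∈ D i) (hq : ∀ i, q i ∈ D i) :
    Real.sign (orientationDet p) = Real.sign (orientationDet q) :=
  (convex_pi fun i _ => hconv i).isPreconnected.sign_eq_of_ne_zero
    (continuous_orientationDet d).continuousOn
    (fun _ hr => (hD.affineIndependent (Set.mem_univ_pi.1 hr)).orientationDet_ne_zero)
    (Set.mem_univ_pi.2 hp) (Set.mem_univ_pi.2 hq)

end SeparatedTuple

theorem separated_family_constant_order_type_general (d n : ℕ)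
    (C : Fin n → Set (EuclideanSpace ℝ (Fin d))) (hconv : ∀ i, Convex ℝ (C i))
    (hsep : SeparatedFamily d C)
    (p q : Fin n → EuclideanSpace ℝ (Fin d))
    (hp : ∀ i, p i ∈ C i) (hq : ∀ i, q i ∈ C i)
    (ind : Fin (d + 1) → Fin n) (hind : StrictMono ind) :
    Real.sign (Matrix.det (Matrix.of fun k l : Fin d =>
        (p (ind l.succ) - p (ind 0)) k)) =
      Real.sign (Matrix.det (Matrix.of fun k l : Fin d =>
        (q (ind l.succ) - q (ind 0)) k)) :=
  (hsep ind hind.injective).sign_orientationDet_eq (fun i => hconv (ind i))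
    (p := p ∘ ind) (q := q ∘ ind) (fun i => hp (ind i)) (fun i => hq (ind i))

/-- If `C 0, …, C (n-1)` is a separated family of convex sets in `ℝᵈ` (with
`n ≥ d+1`), then all transversal point sequences `p i ∈ C i` have the same order
type: for any indices `i 0 < … < i d` and any choices `p i ∈ C i`, `q i ∈ C i`,
the determinants of the matrices with columns `p (i k) - p (i 0)` resp.
`q (i k) - q (i 0)` (`k = 1, …, d`) have the same sign. -/
theorem separated_family_constant_order_type (d n : ℕ) (hn : d + 1 ≤ n)
    (C : Fin n → Set (EuclideanSpace ℝ (Fin d))) (hconv : ∀ i, Convex ℝ (C i))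
    (hsep : SeparatedFamily d C)
    (p q : Fin n → EuclideanSpace ℝ (Fin d))
    (hp : ∀ i, p i ∈ C i) (hq : ∀ i, q i ∈ C i)
    (ind : Fin (d + 1) → Fin n) (hind : StrictMono ind) :
    Real.sign (Matrix.det (Matrix.of fun k l : Fin d =>
        (p (ind l.succ) - p (ind 0)) k)) =
      Real.sign (Matrix.det (Matrix.of fun k l : Fin d =>
        (q (ind l.succ) - q (ind 0)) k)) :=
  separated_family_constant_order_type_general d n C hconv hsep p q hp hq ind hind
end

section
/- Let O be a point of R^d and let Q_1, ..., Q_{d+1} be nonempty finite sets in R^d such that the family consisting of {O}, conv(Q_1), ..., conv(Q_{d+1}) is separated. Then either every d-dimensional simplex with exactly one vertex in each Q_i contains O in its interior, or no such simplex contains O in its closure. -/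
/-!
Fix any affine basis `b₀` of `ℝᵈ` and write `D p` for the determinant of the matrix of barycentric
coordinates of a tuple `p` with respect to `b₀`. By Cramer's rule, the `i`-th barycentric coordinate
of `O` in the simplex `u` has the sign of `D u * D (update u i O)`. By Radon's theorem, separation
makes every transversal of `d + 1` members of the family affinely independent, so this product
never vanishes while `u` ranges over the connected set `∏ i, conv (Q i)`; hence its sign is
constant there. If one simplex contains `O` in its closure, all these signs are therefore
positive, for every simplex.
-/

open Function Set

theorem SeparatedTuple.affineIndependent_s13 {d : ℕ} {C : Fin (d + 1) → Set (EuclideanSpace ℝ (Fin d))}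
    (hC : SeparatedTuple d C) {p : Fin (d + 1) → EuclideanSpace ℝ (Fin d)} (hp : ∀ i, p i ∈ C i) :
    AffineIndependent ℝ p := by
  classical
  by_contra hdep
  obtain ⟨I, x, hxI, hxJ⟩ := Convex.radon_partition hdep
  obtain ⟨i, hi⟩ : I.Nonempty := by
    by_contra! hI
    simp [hI] at hxI
  obtain ⟨j, hj⟩ : Iᶜ.Nonempty := by
    by_contra! hJ
    simp [hJ] at hxJ
  have hI : 1 ≤ I.toFinset.card := Finset.card_pos.2 ⟨i, by simpa using hi⟩
  have hJ : I.toFinset.card ≤ d := by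
    simpa using Finset.card_lt_univ_of_notMem (s := I.toFinset) (x := j) (by simpa using hj)
  obtain ⟨f, c, -, hlt, hgt⟩ := hC I.toFinset hI hJ
  have hfx_lt : f x < c := by
    refine convexHull_min ?_ (convex_halfSpace_lt f.isLinear c) hxI
    rintro _ ⟨i, hi, rfl⟩
    exact hlt i (by simpa using hi) _ (hp i)
  have hfx_gt : c < f x := by
    refine convexHull_min ?_ (convex_halfSpace_gt f.isLinear c) hxJ
    rintro _ ⟨i, hi, rfl⟩
    exact hgt i (by simpa using hi) _ (hp i)
  exact hfx_lt.not_gt hfx_gt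

namespace AffineBasis

section

variable {ι k V P : Type*} [Fintype ι] [DecidableEq ι] [AddCommGroup V] [AddTorsor V P]

theorem det_toMatrix_mul_coord [CommRing k] [Module k V] (b₀ b : AffineBasis ι k P) (i : ι)
    (x : P) : (b₀.toMatrix b).det * b.coord i x = (b₀.toMatrix (update b i x)).det := by
  have h := congrFun (b₀.det_smul_coords_eq_cramer_coords b x) i
  rw [Pi.smul_apply, smul_eq_mul, coords_apply, Matrix.cramer_transpose_apply] at h
  rw [h]
  congr 1
  ext j l
  rcases eq_or_ne j i with rfl | hj <;> simp [*]

theorem det_toMatrix_mul_det_toMatrix_update [CommRing k] [Module k V] (b₀ b : AffineBasis ι k P)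
    (i : ι) (x : P) :
    (b₀.toMatrix b).det * (b₀.toMatrix (update b i x)).det =
      (b₀.toMatrix b).det ^ 2 * b.coord i x := by
  rw [← det_toMatrix_mul_coord]
  ring

theorem det_toMatrix_ne_zero [Field k] [Module k V] [FiniteDimensional k V]
    (b₀ : AffineBasis ι k P) {p : ι → P} (hp : AffineIndependent k p) :
    (b₀.toMatrix p).det ≠ 0 :=
  ((Matrix.isUnit_iff_isUnit_det _).1 <| (b₀.isUnit_toMatrix_iff p).2
    ⟨hp, hp.affineSpan_eq_top_iff_card_eq_finrank_add_one.2 b₀.card_eq_finrank_add_one⟩).ne_zero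

end

section

variable {ι V P : Type*} [Fintype ι] [DecidableEq ι] [NormedAddCommGroup V] [NormedSpace ℝ V]
  [FiniteDimensional ℝ V]

theorem continuous_det_toMatrix [MetricSpace P] [NormedAddTorsor V P] (b₀ : AffineBasis ι ℝ P) :
    Continuous fun p : ι → P => (b₀.toMatrix p).det := by
  refine Continuous.matrix_det (continuous_matrix fun i j => ?_)
  exact (continuous_barycentric_coord b₀ j).comp (continuous_apply i)

theorem mem_interior_convexHull_iff_det (b₀ : AffineBasis ι ℝ V) {p : ι → V}
    (hp : AffineIndependent ℝ p) (x : V) :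
    x ∈ interior (convexHull ℝ (range p)) ↔
      ∀ i, 0 < (b₀.toMatrix p).det * (b₀.toMatrix (update p i x)).det := by
  let b : AffineBasis ι ℝ V :=
    ⟨p, hp, hp.affineSpan_eq_top_iff_card_eq_finrank_add_one.2 b₀.card_eq_finrank_add_one⟩
  have hsq : 0 < (b₀.toMatrix b).det ^ 2 := sq_pos_of_ne_zero (b₀.det_toMatrix_ne_zero hp)
  rw [show range p = range b from rfl, b.interior_convexHull]
  refine forall_congr' fun i => ?_
  rw [show p = ⇑b from rfl, det_toMatrix_mul_det_toMatrix_update, mul_pos_iff_of_pos_left hsq]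

theorem mem_convexHull_iff_det (b₀ : AffineBasis ι ℝ V) {p : ι → V}
    (hp : AffineIndependent ℝ p) (x : V) :
    x ∈ convexHull ℝ (range p) ↔
      ∀ i, 0 ≤ (b₀.toMatrix p).det * (b₀.toMatrix (update p i x)).det := by
  let b : AffineBasis ι ℝ V :=
    ⟨p, hp, hp.affineSpan_eq_top_iff_card_eq_finrank_add_one.2 b₀.card_eq_finrank_add_one⟩
  have hsq : 0 < (b₀.toMatrix b).det ^ 2 := sq_pos_of_ne_zero (b₀.det_toMatrix_ne_zero hp)
  rw [show range p = range b from rfl, b.convexHull_eq_nonneg_coord]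
  refine forall_congr' fun i => ?_
  rw [show p = ⇑b from rfl, det_toMatrix_mul_det_toMatrix_update, mul_nonneg_iff_of_pos_left hsq]

end

end AffineBasis

theorem IsPreconnected.lt_of_lt_of_forall_ne {X α : Type*} [TopologicalSpace X] [LinearOrder α]
    [TopologicalSpace α] [OrderClosedTopology α] {s : Set X} (hs : IsPreconnected s) {f : X → α}
    (hf : ContinuousOn f s) {c : α} (hfc : ∀ x ∈ s, f x ≠ c) {a b : X} (ha : a ∈ s) (hb : b ∈ s)
    (hfa : c < f a) : c < f b := by
  by_contra! hfb
  obtain ⟨x, hx, hfx⟩ := hs.intermediate_value hb ha hf ⟨hfb, hfa.le⟩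
  exact hfc x hx hfx

theorem SeparatedFamily.affineIndependent_s13 {d : ℕ} {ι : Type*}
    {C : ι → Set (EuclideanSpace ℝ (Fin d))} (hC : SeparatedFamily d C) {g : Fin (d + 1) → ι}
    (hg : Injective g) {p : Fin (d + 1) → EuclideanSpace ℝ (Fin d)} (hp : ∀ i, p i ∈ C (g i)) :
    AffineIndependent ℝ p :=
  (hC g hg).affineIndependent_s13 hp

section SeparatedCons

variable {d : ℕ} {O : EuclideanSpace ℝ (Fin d)} {K : Fin (d + 1) → Set (EuclideanSpace ℝ (Fin d))}
  {u : Fin (d + 1) → EuclideanSpace ℝ (Fin d)}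

theorem affineIndependent_of_separatedFamily_cons
    (hsep : SeparatedFamily d (Fin.cons {O} K : Fin (d + 2) → Set (EuclideanSpace ℝ (Fin d))))
    (hu : ∀ i, u i ∈ K i) : AffineIndependent ℝ u :=
  hsep.affineIndependent_s13 (Fin.succ_injective _) (by simpa using hu)

theorem affineIndependent_update_of_separatedFamily_cons
    (hsep : SeparatedFamily d (Fin.cons {O} K : Fin (d + 2) → Set (EuclideanSpace ℝ (Fin d))))
    (hu : ∀ i, u i ∈ K i) (i : Fin (d + 1)) : AffineIndependent ℝ (update u i O) := by
  refine hsep.affineIndependent_s13 (g := update Fin.succ i 0) ?_ fun j => ?_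
  · intro j l hjl
    simp only [update_apply] at hjl
    split_ifs at hjl <;> simp_all [eq_comm (a := (0 : Fin (d + 2)))]
  · rcases eq_or_ne j i with rfl | hj <;> simp [*]

theorem det_mul_det_update_pos_of_separatedFamily_cons
    (hsep : SeparatedFamily d (Fin.cons {O} K : Fin (d + 2) → Set (EuclideanSpace ℝ (Fin d))))
    (hK : ∀ i, Convex ℝ (K i)) (b₀ : AffineBasis (Fin (d + 1)) ℝ (EuclideanSpace ℝ (Fin d)))
    {v : Fin (d + 1) → EuclideanSpace ℝ (Fin d)} (hu : ∀ i, u i ∈ K i) (hv : ∀ i, v i ∈ K i)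
    (i : Fin (d + 1)) (h : 0 ≤ (b₀.toMatrix u).det * (b₀.toMatrix (update u i O)).det) :
    0 < (b₀.toMatrix v).det * (b₀.toMatrix (update v i O)).det := by
  have hcont : Continuous fun w => (b₀.toMatrix w).det * (b₀.toMatrix (update w i O)).det :=
    b₀.continuous_det_toMatrix.mul <|
      b₀.continuous_det_toMatrix.comp (continuous_id.update i continuous_const)
  have hne : ∀ w ∈ univ.pi K, (b₀.toMatrix w).det * (b₀.toMatrix (update w i O)).det ≠ 0 :=
    fun w hw => mul_ne_zero
      (b₀.det_toMatrix_ne_zero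
        (affineIndependent_of_separatedFamily_cons hsep fun j => hw j trivial))
      (b₀.det_toMatrix_ne_zero
        (affineIndependent_update_of_separatedFamily_cons hsep (fun j => hw j trivial) i))
  have hu' : u ∈ univ.pi K := fun j _ => hu j
  exact (convex_pi fun j _ => hK j).isPreconnected.lt_of_lt_of_forall_ne hcont.continuousOn
    hne hu' (fun j _ => hv j) (h.lt_of_ne (hne u hu').symm)

end SeparatedCons

theorem separated_zero_or_all_simplices_general (d : ℕ) (O : EuclideanSpace ℝ (Fin d))
    (Q : Fin (d + 1) → Finset (EuclideanSpace ℝ (Fin d)))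
    (hsep : SeparatedFamily d
      (Fin.cons {O} (fun i => convexHull ℝ (Q i : Set (EuclideanSpace ℝ (Fin d)))) :
        Fin (d + 2) → Set (EuclideanSpace ℝ (Fin d)))) :
    (∀ v : Fin (d + 1) → EuclideanSpace ℝ (Fin d),
        (∀ i, v i ∈ Q i) → AffineIndependent ℝ v →
          O ∈ interior (convexHull ℝ (Set.range v))) ∨
      (∀ v : Fin (d + 1) → EuclideanSpace ℝ (Fin d),
        (∀ i, v i ∈ Q i) → AffineIndependent ℝ v →
          O ∉ closure (convexHull ℝ (Set.range v))) := by
  by_cases h : ∃ v₀ : Fin (d + 1) → EuclideanSpace ℝ (Fin d),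
      (∀ i, v₀ i ∈ Q i) ∧ O ∈ closure (convexHull ℝ (range v₀))
  · obtain ⟨v₀, hv₀Q, hO⟩ := h
    have hv₀ : ∀ i, v₀ i ∈ convexHull ℝ (Q i : Set (EuclideanSpace ℝ (Fin d))) :=
      fun i => subset_convexHull ℝ _ (hv₀Q i)
    have hind₀ := affineIndependent_of_separatedFamily_cons hsep hv₀
    let b₀ : AffineBasis (Fin (d + 1)) ℝ (EuclideanSpace ℝ (Fin d)) :=
      ⟨v₀, hind₀, hind₀.affineSpan_eq_top_iff_card_eq_finrank_add_one.2 (by simp)⟩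
    rw [((finite_range v₀).isClosed_convexHull ℝ).closure_eq, b₀.mem_convexHull_iff_det hind₀] at hO
    refine Or.inl fun v hvQ hind => (b₀.mem_interior_convexHull_iff_det hind O).2 fun i => ?_
    exact det_mul_det_update_pos_of_separatedFamily_cons hsep (fun i => convex_convexHull ℝ _) b₀
      hv₀ (fun i => subset_convexHull ℝ _ (hvQ i)) i (hO i)
  · exact Or.inr fun v hv _ hO => h ⟨v, hv, hO⟩

/-- If the family `{O}, conv (Q 0), …, conv (Q d)` is separated, then either every
`d`-dimensional simplex with exactly one vertex in each `Q i` contains `O` in its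
interior, or no such simplex contains `O` in its closure. -/
theorem separated_zero_or_all_simplices (d : ℕ) (O : EuclideanSpace ℝ (Fin d))
    (Q : Fin (d + 1) → Finset (EuclideanSpace ℝ (Fin d))) (hne : ∀ i, (Q i).Nonempty)
    (hsep : SeparatedFamily d
      (Fin.cons {O} (fun i => convexHull ℝ (Q i : Set (EuclideanSpace ℝ (Fin d)))) :
        Fin (d + 2) → Set (EuclideanSpace ℝ (Fin d)))) :
    (∀ v : Fin (d + 1) → EuclideanSpace ℝ (Fin d),
        (∀ i, v i ∈ Q i) → AffineIndependent ℝ v →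
          O ∈ interior (convexHull ℝ (Set.range v))) ∨
      (∀ v : Fin (d + 1) → EuclideanSpace ℝ (Fin d),
        (∀ i, v i ∈ Q i) → AffineIndependent ℝ v →
          O ∉ closure (convexHull ℝ (Set.range v))) :=
  separated_zero_or_all_simplices_general d O Q hsep
end
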